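/- arXiv:math/0112133 — 2 statements merged into one kernel-verified Lean document; each statement's English description precedes it below -/
import Mathlib

section
/- For partitions λ, μ ⊆ l×k, the maximal power d_max of q appearing in the quantum product σ_λ * σ_μ in QH*(Gr(l,l+k)) satisfies d_max ≤ min(diag(λ), diag(μ)), where diag(ν) is the side length of the largest square contained in ν. -/
open YoungDiagram

namespace QCGrass

/-- The rectangular Young diagram with `m` rows of length `M`. -/
def rect (m M : ℕ) : YoungDiagram :=
  ⟨Finset.range m ×ˢ Finset.range M, by
    intro a b hba ha
    simp only [Finset.coe_product, Set.mem_prod, Finset.mem_coe, Finset.mem_range] at *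
    exact ⟨lt_of_le_of_lt hba.1 ha.1, lt_of_le_of_lt hba.2 ha.2⟩⟩

/-- The cells of the skew shape `nu / lam`. -/
def skewCells (lam nu : YoungDiagram) : Finset (ℕ × ℕ) := nu.cells \ lam.cells

/-- `T` is a Littlewood–Richardson skew tableau of shape `nu / lam` and content `mu`:
entries (valued in `{1, 2, …}`, with `0` meaning "no entry") are supported exactly on the
skew shape `nu / lam`, weakly increase along rows, strictly increase down columns, the number
of entries equal to `r + 1` is the `r`-th row length of `mu`, and the reverse reading word
(rows read right to left, top to bottom) is a lattice word. -/
def IsLRTableau (lam mu nu : YoungDiagram) (T : ℕ × ℕ → ℕ) : Prop :=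
  lam ≤ nu ∧
  (∀ p : ℕ × ℕ, 1 ≤ T p ↔ p ∈ skewCells lam nu) ∧
  (∀ i j j' : ℕ, j ≤ j' → (i, j) ∈ skewCells lam nu → (i, j') ∈ skewCells lam nu →
      T (i, j) ≤ T (i, j')) ∧
  (∀ i i' j : ℕ, i < i' → (i, j) ∈ skewCells lam nu → (i', j) ∈ skewCells lam nu →
      T (i, j) < T (i', j)) ∧
  (∀ r : ℕ, ((skewCells lam nu).filter (fun p => T p = r + 1)).card = mu.rowLen r) ∧
  (∀ i j r : ℕ,
      ((skewCells lam nu).filter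
        (fun p => T p = r + 2 ∧ (p.1 < i ∨ (p.1 = i ∧ j ≤ p.2)))).card ≤
      ((skewCells lam nu).filter
        (fun p => T p = r + 1 ∧ (p.1 < i ∨ (p.1 = i ∧ j ≤ p.2)))).card)

/-- The Littlewood–Richardson coefficient `c^nu_{lam, mu}`, defined as the number of
Littlewood–Richardson skew tableaux of shape `nu / lam` and content `mu`. -/
noncomputable def lrCoeff (lam mu nu : YoungDiagram) : ℕ :=
  Nat.card {T : ℕ × ℕ → ℕ // IsLRTableau lam mu nu T}

/-- The set of boxes (in `0`-indexed matrix coordinates) of `mu` rotated 180 degrees and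
placed in the lower-right corner of the `l × k` rectangle. -/
def rotSet (l k : ℕ) (mu : YoungDiagram) : Set (ℕ × ℕ) :=
  {p | p.1 < l ∧ p.2 < k ∧ k - mu.rowLen (l - 1 - p.1) ≤ p.2}

/-- Two boxes are adjacent when they share an edge. -/
def Adjacent (p q : ℕ × ℕ) : Prop :=
  (p.1 = q.1 ∧ (p.2 = q.2 + 1 ∨ q.2 = p.2 + 1)) ∨
  (p.2 = q.2 ∧ (p.1 = q.1 + 1 ∨ q.1 = p.1 + 1))

/-- `mu` is obtained from `lam` by removing a legal `n`-rim hook: `mu ⊆ lam` (so the removal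
leaves a Young diagram), the removed set has `n` boxes, is edge-connected, and contains
no `2 × 2` square. -/
def IsRimHookRemoval (n : ℕ) (lam mu : YoungDiagram) : Prop :=
  mu ≤ lam ∧ (skewCells mu lam).card = n ∧
  (∀ p ∈ skewCells mu lam, ∀ q ∈ skewCells mu lam,
    Relation.ReflTransGen
      (fun a b => a ∈ skewCells mu lam ∧ b ∈ skewCells mu lam ∧ Adjacent a b) p q) ∧
  ¬ ∃ i j : ℕ, (i, j) ∈ skewCells mu lam ∧ (i + 1, j) ∈ skewCells mu lam ∧
      (i, j + 1) ∈ skewCells mu lam ∧ (i + 1, j + 1) ∈ skewCells mu lam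

/-- One legal `n`-rim hook removal step. -/
def RimStep (n : ℕ) (lam mu : YoungDiagram) : Prop := IsRimHookRemoval n lam mu

/-- A diagram is an `n`-core when no legal `n`-rim hook can be removed from it. -/
def IsCore (n : ℕ) (t : YoungDiagram) : Prop := ¬ ∃ s, RimStep n t s

/-- `ReachesIn n m a b` : `b` is obtained from `a` by `m` successive legal `n`-rim hook
removals. -/
def ReachesIn (n : ℕ) : ℕ → YoungDiagram → YoungDiagram → Prop
  | 0 => fun a b => a = b
  | m + 1 => fun a b => ∃ c, RimStep n a c ∧ ReachesIn n m c b

/-- The width (number of occupied columns) of the strip removed in passing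
from `lam` to `mu`. -/
def hookWidth (lam mu : YoungDiagram) : ℕ := ((skewCells mu lam).image Prod.snd).card

/-- The height (number of occupied rows) of the strip removed in passing
from `lam` to `mu`. -/
def hookHeight (lam mu : YoungDiagram) : ℕ := ((skewCells mu lam).image Prod.fst).card

/-- `ReachesInSign n k m s a b` : `b` is obtained from `a` by `m` successive legal `n`-rim
hook removals, and `s = ∏ (-1)^(k - width(R_i))` over the removed hooks `R_i`. -/
def ReachesInSign (n k : ℕ) : ℕ → ℤ → YoungDiagram → YoungDiagram → Prop
  | 0 => fun s a b => a = b ∧ s = 1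
  | m + 1 => fun s a b => ∃ c s', RimStep n a c ∧ ReachesInSign n k m s' c b ∧
      s = (-1) ^ (k - hookWidth a c) * s'

/-- `diagLen lam` is the number of diagonal boxes of `lam`, i.e. the side length of the
largest square contained in `lam`. -/
def diagLen (lam : YoungDiagram) : ℕ := (lam.cells.filter fun p => p.1 = p.2).card

/-- A `d × d` square of boxes fits inside `lam ∩ rotate(mu)` within the `l × k` rectangle. -/
def SquareFits (l k : ℕ) (lam mu : YoungDiagram) (d : ℕ) : Prop :=
  ∃ i j : ℕ, ∀ i' j' : ℕ, i ≤ i' → i' < i + d → j ≤ j' → j' < j + d →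
    (i', j') ∈ lam.cells ∧ (i', j') ∈ rotSet l k mu

/-- The triple product `σ_lam · σ_mu · σ_nu` is nonzero in `H^*(Gr(l, l+k))`: some `rho ⊆ l × k`
has `c^rho_{lam,mu} ≠ 0` and `rho` is disjoint from `rotate(nu)`. -/
def TripleNonzero (l k : ℕ) (lam mu nu : YoungDiagram) : Prop :=
  ∃ rho, rho ≤ rect l k ∧ lrCoeff lam mu rho ≠ 0 ∧
    ∀ i, i < l → rho.rowLen i + nu.rowLen (l - 1 - i) ≤ k


/-- The pairs `(rho, T)` where `T` is an LR tableau witnessing `c^rho_{lam,mu}`, `rho` has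
first part at most `k`, and the reduction of `rho` to its `(l+k)`-core `nu` uses `e` rim hook
removals with total sign `s`. -/
def QSet (l k : ℕ) (lam mu nu : YoungDiagram) (e : ℕ) (s : ℤ) : Type :=
  {p : YoungDiagram × (ℕ × ℕ → ℕ) //
    IsLRTableau lam mu p.1 p.2 ∧ p.1.rowLen 0 ≤ k ∧
    ReachesInSign (l + k) k e s p.1 nu ∧ IsCore (l + k) nu}

/-- The coefficient of `q^e σ_nu` in the quantum product `σ_lam * σ_mu` in
`QH^*(Gr(l, l+k))`, as given by the rim hook rule of Bertram–Ciocan-Fontanine–Fulton: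
`Σ_{rho} (-1)^{Σ (k - width(R_i))} c^rho_{lam,mu}` over `rho` with first part at most `k`
whose `(l+k)`-core is `nu` with `e` rim hooks removed. -/
noncomputable def qCoeff (l k : ℕ) (lam mu nu : YoungDiagram) (e : ℕ) : ℤ :=
  (Nat.card (QSet l k lam mu nu e 1) : ℤ) - (Nat.card (QSet l k lam mu nu e (-1)) : ℤ)


/-!
Encode a diagram by the beta numbers `a_i + N - 1 - i` of its first `N` rows, read as beads on
an abacus: removing an `n`-rim hook slides one bead down `n` places onto an empty position.
Take `N = 2l` beads, enough for the Littlewood–Richardson shape `ρ` of a term of `σ_λ σ_μ`,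
and `n = l + k`. All beads of `ρ` lie below `2n`, so each slide uses up a movable bead and frees
none; hence `e` hook removals need `e` movable beads in `ρ`. The largest landing position `m`
of these lies below `l`, and the beads above it show that `ρ` has a column `J ≥ e - 1` of
length at least `l + e`. Since `λ` and `μ` have at most `l` rows, the columns of `ρ / λ` have
length at most `l`, so `λ` contains an `e × e` square; and the `e × e` block of `ρ` in rows
`l, …, l + e - 1` lies in `ρ / λ`, where column strictness and the lattice property force
`μ` to have `e` rows of length at least `e`.
-/

lemma rowLen_mono {a b : YoungDiagram} (h : a ≤ b) (i : ℕ) : a.rowLen i ≤ b.rowLen i :=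
  le_of_forall_lt fun _ hj => mem_iff_lt_rowLen.mp (h (mem_iff_lt_rowLen.mpr hj))

lemma colLen_mono {a b : YoungDiagram} (h : a ≤ b) (j : ℕ) : a.colLen j ≤ b.colLen j :=
  le_of_forall_lt fun _ hi => mem_iff_lt_colLen.mp (h (mem_iff_lt_colLen.mpr hi))

lemma colLen_le_of_le_rect {l k : ℕ} {a : YoungDiagram} (h : a ≤ rect l k) (j : ℕ) :
    a.colLen j ≤ l :=
  le_of_forall_lt fun i hi => by
    have : (i, j) ∈ (rect l k).cells := h (mem_iff_lt_colLen.mpr hi)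
    simp only [rect, Finset.mem_product, Finset.mem_range] at this
    exact this.1

lemma mem_skewCells {lam nu : YoungDiagram} {p : ℕ × ℕ} :
    p ∈ skewCells lam nu ↔ p ∈ nu ∧ p ∉ lam := by
  simp [skewCells, mem_cells]

lemma le_diagLen_of_mem {a : YoungDiagram} {i j e : ℕ} (h : (i, j) ∈ a) (hi : e ≤ i + 1)
    (hj : e ≤ j + 1) : e ≤ diagLen a := by
  have hsub : (Finset.range e).map ⟨fun t => (t, t), fun _ _ h => congrArg Prod.fst h⟩ ⊆
      a.cells.filter fun p => p.1 = p.2 := by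
    intro p hp
    obtain ⟨t, ht, rfl⟩ := Finset.mem_map.mp hp
    rw [Finset.mem_range] at ht
    exact Finset.mem_filter.mpr ⟨a.up_left_mem (by omega) (by omega) h, rfl⟩
  simpa [diagLen] using Finset.card_le_card hsub

/-- Beads that can slide `n` positions down on an abacus with bead set `B`. -/
def movable (n : ℕ) (B : Finset ℕ) : Finset ℕ := B.filter fun x => n ≤ x ∧ x - n ∉ B

/-- Once every bead lies below `2 n`, a bead that has slid down can never slide again, and
sliding it frees no other bead. -/
lemma card_movable_slide_lt {n γ : ℕ} {B : Finset ℕ} (hB : ∀ x ∈ B, x < 2 * n)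
    (hγ : γ ∉ B) (hγn : γ + n ∈ B) :
    (movable n (insert γ (B.erase (γ + n)))).card < (movable n B).card := by
  have hγn' : γ + n ∈ movable n B :=
    Finset.mem_filter.mpr ⟨hγn, by omega, by simpa using hγ⟩
  refine lt_of_le_of_lt (Finset.card_le_card fun x hx => ?_)
    (Finset.card_erase_lt_of_mem hγn')
  obtain ⟨hxB, hnx, hxn⟩ := Finset.mem_filter.mp hx
  have hγlt := hB _ hγn
  obtain ⟨hxγ, hxB⟩ : x ≠ γ + n ∧ x ∈ B := by
    rcases Finset.mem_insert.mp hxB with rfl | hxB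
    · omega
    · exact Finset.mem_erase.mp hxB
  have hxlt := hB x hxB
  refine Finset.mem_erase.mpr ⟨hxγ, Finset.mem_filter.mpr ⟨hxB, hnx, fun hxnB => hxn ?_⟩⟩
  exact Finset.mem_insert_of_mem (Finset.mem_erase.mpr ⟨by omega, hxnB⟩)

def beta (N : ℕ) (a : YoungDiagram) (i : ℕ) : ℕ := a.rowLen i + (N - 1 - i)

def betaSet (N : ℕ) (a : YoungDiagram) : Finset ℕ := (Finset.range N).image (beta N a)

lemma beta_strictAntiOn (N : ℕ) (a : YoungDiagram) :
    StrictAntiOn (beta N a) (Set.Iio N) := by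
  intro i _ i' hi' h
  have := a.rowLen_anti i i' h.le
  simp only [Set.mem_Iio] at hi'
  unfold beta
  omega

lemma card_betaSet (N : ℕ) (a : YoungDiagram) : (betaSet N a).card = N := by
  rw [betaSet, Finset.card_image_of_injOn (by simpa using (beta_strictAntiOn N a).injOn),
    Finset.card_range]

lemma mem_betaSet {N : ℕ} {a : YoungDiagram} {x : ℕ} :
    x ∈ betaSet N a ↔ ∃ i < N, beta N a i = x := by
  simp [betaSet]

lemma lt_of_mem_betaSet {N : ℕ} {a : YoungDiagram} {x : ℕ} (hx : x ∈ betaSet N a) :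
    x < a.rowLen 0 + N := by
  obtain ⟨i, hi, rfl⟩ := mem_betaSet.mp hx
  have := a.rowLen_anti 0 i (Nat.zero_le _)
  unfold beta
  omega

lemma mk_mem_skewCells {lam nu : YoungDiagram} {i j : ℕ} :
    (i, j) ∈ skewCells lam nu ↔ lam.rowLen i ≤ j ∧ j < nu.rowLen i := by
  rw [mem_skewCells, mem_iff_lt_rowLen, mem_iff_lt_rowLen, not_lt]
  exact and_comm

lemma exists_vertical_edge_of_reflTransGen {S : Finset (ℕ × ℕ)} {p z : ℕ × ℕ}
    (h : Relation.ReflTransGen (fun a b => a ∈ S ∧ b ∈ S ∧ Adjacent a b) p z) {i : ℕ}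
    (hp : p.1 ≤ i) (hz : i < z.1) : ∃ j, (i, j) ∈ S ∧ (i + 1, j) ∈ S := by
  induction h with
  | refl => omega
  | @tail u v _ huv ih =>
    by_cases hu : i < u.1
    · exact ih hu
    obtain ⟨u1, u2⟩ := u
    obtain ⟨v1, v2⟩ := v
    obtain ⟨hu', hv', hadj⟩ := huv
    simp only [Adjacent] at hu hz hadj
    obtain ⟨rfl, rfl⟩ : u2 = v2 ∧ u1 = i := by omega
    obtain rfl : v1 = u1 + 1 := by omega
    exact ⟨u2, hu', hv'⟩

lemma card_skewCells_eq_sum (a b : YoungDiagram) :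
    (skewCells b a).card =
      ∑ i ∈ (skewCells b a).image Prod.fst, (a.rowLen i - b.rowLen i) := by
  rw [Finset.card_eq_sum_card_image Prod.fst]
  refine Finset.sum_congr rfl fun i _ => ?_
  have hfiber : (skewCells b a).filter (fun p => p.1 = i) =
      (Finset.Ico (b.rowLen i) (a.rowLen i)).map ⟨(i, ·), Prod.mk_right_injective i⟩ := by
    ext ⟨x, y⟩
    simp only [Finset.mem_filter, Finset.mem_map, Finset.mem_Ico, Function.Embedding.coeFn_mk,
      Prod.mk.injEq, mk_mem_skewCells]
    constructor
    · rintro ⟨hy, rfl⟩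
      exact ⟨y, hy, rfl, rfl⟩
    · rintro ⟨y, hy, rfl, rfl⟩
      exact ⟨hy, rfl⟩
  rw [hfiber, Finset.card_map, Nat.card_Ico]

lemma sum_Icc_sub_add_eq {f g : ℕ → ℕ} {r q : ℕ} (hrq : r ≤ q) (hgf : ∀ i, g i ≤ f i)
    (hstep : ∀ i, r ≤ i → i < q → g i + 1 = f (i + 1)) :
    ∑ i ∈ Finset.Icc r q, (f i - g i) + g q = f r + (q - r) := by
  induction q, hrq using Nat.le_induction with
  | base =>
    have := hgf r
    simp only [Finset.Icc_self, Finset.sum_singleton]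
    omega
  | succ q hrq ih =>
    rw [Finset.sum_Icc_succ_top (by omega)]
    have := ih fun i hi hiq => hstep i hi (by omega)
    have := hstep q hrq (by omega)
    have := hgf (q + 1)
    omega

/-- Connectedness makes consecutive rows of a rim hook overlap, and the absence of `2 × 2`
squares makes the overlap a single column. -/
lemma IsRimHookRemoval.rowLen_add_one_eq {n : ℕ} {a b : YoungDiagram}
    (h : IsRimHookRemoval n a b) {i j i' j' m : ℕ} (hp : (i, j) ∈ skewCells b a)
    (hq : (i', j') ∈ skewCells b a) (him : i ≤ m) (hmi : m < i') :
    b.rowLen m + 1 = a.rowLen (m + 1) := by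
  obtain ⟨-, -, hconn, hno⟩ := h
  obtain ⟨c, hc, hc'⟩ := exists_vertical_edge_of_reflTransGen (hconn _ hp _ hq) him hmi
  rw [mk_mem_skewCells] at hc hc'
  by_contra hne
  have := a.rowLen_anti m (m + 1) (by omega)
  have := b.rowLen_anti m (m + 1) (by omega)
  exact hno ⟨m, b.rowLen m, by simp only [mk_mem_skewCells]; omega⟩

lemma IsRimHookRemoval.exists_rows {n : ℕ} {a b : YoungDiagram} (h : IsRimHookRemoval n a b)
    (hn : 0 < n) :
    ∃ r q, r ≤ q ∧ (∀ i, i < r ∨ q < i → b.rowLen i = a.rowLen i) ∧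
      (∀ i, r ≤ i → i < q → b.rowLen i + 1 = a.rowLen (i + 1)) ∧
      b.rowLen q < a.rowLen q ∧ n + b.rowLen q = a.rowLen r + (q - r) := by
  set R := (skewCells b a).image Prod.fst
  have hmemR : ∀ i, i ∈ R ↔ b.rowLen i < a.rowLen i := by
    intro i
    simp only [R, Finset.mem_image, Prod.exists, exists_and_right, exists_eq_right,
      mk_mem_skewCells]
    exact ⟨fun ⟨_, hj⟩ => by omega, fun hi => ⟨_, le_rfl, hi⟩⟩
  have hRne : R.Nonempty := by
    rw [Finset.image_nonempty, ← Finset.card_pos, h.2.1]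
    exact hn
  set r := R.min' hRne
  set q := R.max' hRne
  have hr := (hmemR r).mp (R.min'_mem hRne)
  have hq := (hmemR q).mp (R.max'_mem hRne)
  have hrq : r ≤ q := R.min'_le q (R.max'_mem hRne)
  have hshift : ∀ i, r ≤ i → i < q → b.rowLen i + 1 = a.rowLen (i + 1) := fun i hri hiq =>
    h.rowLen_add_one_eq (mk_mem_skewCells.mpr ⟨le_rfl, hr⟩)
      (mk_mem_skewCells.mpr ⟨le_rfl, hq⟩) hri hiq
  have hout : ∀ i, i < r ∨ q < i → b.rowLen i = a.rowLen i := by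
    intro i hi
    have hiR : i ∉ R := fun hiR => by
      have := R.min'_le i hiR
      have := R.le_max' i hiR
      omega
    have := rowLen_mono h.1 i
    rw [hmemR] at hiR
    omega
  refine ⟨r, q, hrq, hout, hshift, hq, ?_⟩
  have hsum : ∑ i ∈ R, (a.rowLen i - b.rowLen i) =
      ∑ i ∈ Finset.Icc r q, (a.rowLen i - b.rowLen i) :=
    Finset.sum_subset (fun i hi => Finset.mem_Icc.mpr ⟨R.min'_le i hi, R.le_max' i hi⟩)
      fun i _ hiR => by rw [hmemR] at hiR; omega
  have := sum_Icc_sub_add_eq hrq (rowLen_mono h.1) hshift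
  rw [← h.2.1, card_skewCells_eq_sum, hsum]
  omega

/-- Replacing rows `r, …, q - 1` by rows `r + 1, …, q` shortened by one, and row `q` by a row
that makes the total loss `n`, slides the bead `beta N a r` down by `n`. -/
lemma betaSet_eq_of_rows {N n r q : ℕ} {a b : YoungDiagram} (hn : 0 < n) (hrq : r ≤ q)
    (hqN : q < N) (hout : ∀ i, i < r ∨ q < i → b.rowLen i = a.rowLen i)
    (hshift : ∀ i, r ≤ i → i < q → b.rowLen i + 1 = a.rowLen (i + 1))
    (hsize : n + b.rowLen q = a.rowLen r + (q - r)) :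
    beta N b q + n = beta N a r ∧ beta N b q ∉ betaSet N a ∧
      betaSet N b = insert (beta N b q) ((betaSet N a).erase (beta N a r)) := by
  have hγ : beta N b q + n = beta N a r := by unfold beta; omega
  have hrB : beta N a r ∈ betaSet N a := mem_betaSet.mpr ⟨r, by omega, rfl⟩
  have hcardX : ((betaSet N a).erase (beta N a r)).card + 1 = N := by
    rw [Finset.card_erase_of_mem hrB, card_betaSet]
    omega
  have hsub : betaSet N b ⊆ insert (beta N b q) ((betaSet N a).erase (beta N a r)) := by
    intro x hx
    obtain ⟨i, hi, rfl⟩ := mem_betaSet.mp hx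
    rcases eq_or_ne i q with rfl | hiq
    · exact Finset.mem_insert_self _ _
    obtain ⟨j, hj, hjr, hbj⟩ : ∃ j < N, j ≠ r ∧ beta N b i = beta N a j := by
      by_cases hmid : r ≤ i ∧ i < q
      · have := hshift i hmid.1 hmid.2
        exact ⟨i + 1, by omega, by omega, by unfold beta; omega⟩
      · have := hout i (by omega)
        exact ⟨i, hi, by omega, by unfold beta; omega⟩
    refine Finset.mem_insert_of_mem
      (Finset.mem_erase.mpr ⟨?_, mem_betaSet.mpr ⟨j, hj, hbj.symm⟩⟩)
    rw [hbj]
    exact fun he => hjr ((beta_strictAntiOn N a).injOn hj (show r < N by omega) he)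
  have heq := Finset.eq_of_subset_of_card_le hsub <|
    (Finset.card_insert_le _ _).trans (by rw [card_betaSet]; omega)
  refine ⟨hγ, fun hmem => ?_, heq⟩
  rw [Finset.insert_eq_of_mem (Finset.mem_erase.mpr ⟨by omega, hmem⟩)] at heq
  have := congrArg Finset.card heq
  rw [card_betaSet] at this
  omega

lemma IsRimHookRemoval.exists_slide {n N : ℕ} {a b : YoungDiagram} (h : IsRimHookRemoval n a b)
    (hn : 0 < n) (hN : a.colLen 0 ≤ N) :
    ∃ γ, γ ∉ betaSet N a ∧ γ + n ∈ betaSet N a ∧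
      betaSet N b = insert γ ((betaSet N a).erase (γ + n)) := by
  obtain ⟨r, q, hrq, hout, hshift, hq, hsize⟩ := h.exists_rows hn
  have hq0 : (q, 0) ∈ a := mem_iff_lt_rowLen.mpr (by omega)
  have hqN : q < N := (mem_iff_lt_colLen.mp hq0).trans_le hN
  obtain ⟨hγ, hγB, heq⟩ := betaSet_eq_of_rows (N := N) hn hrq hqN hout hshift hsize
  exact ⟨beta N b q, hγB, hγ ▸ mem_betaSet.mpr ⟨r, by omega, rfl⟩, hγ ▸ heq⟩

lemma IsRimHookRemoval.card_movable_lt {n N : ℕ} {a b : YoungDiagram}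
    (h : IsRimHookRemoval n a b) (hn : 0 < n) (hN : a.colLen 0 ≤ N)
    (hsmall : a.rowLen 0 + N ≤ 2 * n) :
    (movable n (betaSet N b)).card < (movable n (betaSet N a)).card := by
  obtain ⟨γ, hγ, hγn, heq⟩ := h.exists_slide hn hN
  rw [heq]
  exact card_movable_slide_lt (fun x hx => (lt_of_mem_betaSet hx).trans_le hsmall) hγ hγn

lemma ReachesInSign.le_card_movable {n k e N : ℕ} {s : ℤ} {a nu : YoungDiagram}
    (h : ReachesInSign n k e s a nu) (hn : 0 < n) (hN : a.colLen 0 ≤ N)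
    (hsmall : a.rowLen 0 + N ≤ 2 * n) : e ≤ (movable n (betaSet N a)).card := by
  induction e generalizing s a with
  | zero => exact Nat.zero_le _
  | succ e ih =>
    obtain ⟨c, s', hstep, hrest, -⟩ := h
    have := ih hrest ((colLen_mono hstep.1 0).trans hN)
      ((Nat.add_le_add_right (rowLen_mono hstep.1 0) N).trans hsmall)
    have := hstep.card_movable_lt hn hN hsmall
    omega

lemma card_beta_gt_add {N y : ℕ} {a : YoungDiagram} (hy : y ∉ betaSet N a) :
    ((Finset.range N).filter fun i => y < beta N a i).card + y =
      N + ((Finset.range y).filter fun z => z ∉ betaSet N a).card := by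
  have hinj : Set.InjOn (beta N a) ((Finset.range N).filter fun i => ¬ y < beta N a i) :=
    (beta_strictAntiOn N a).injOn.mono fun i hi => by
      simpa using (Finset.mem_filter.mp hi).1
  have hbelow : ((Finset.range N).filter fun i => ¬ y < beta N a i).card =
      ((Finset.range y).filter fun z => z ∈ betaSet N a).card := by
    rw [← Finset.card_image_of_injOn hinj]
    congr 1
    ext z
    simp only [Finset.mem_image, Finset.mem_filter, Finset.mem_range, not_lt, mem_betaSet]
    constructor
    · rintro ⟨i, ⟨hi, hiy⟩, rfl⟩
      exact ⟨lt_of_le_of_ne hiy fun h => hy (mem_betaSet.mpr ⟨i, hi, h⟩), i, hi, rfl⟩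
    · rintro ⟨hzy, i, hi, rfl⟩
      exact ⟨i, ⟨hi, hzy.le⟩, rfl⟩
  have h1 := Finset.card_filter_add_card_filter_not (s := Finset.range N) (y < beta N a ·)
  have h2 := Finset.card_filter_add_card_filter_not (s := Finset.range y) (· ∈ betaSet N a)
  simp only [Finset.card_range] at h1 h2
  omega

/-- For an empty position `y` of the abacus, the beads above `y` are those of the first rows,
and they all reach the column numbered by the empty positions below `y`. -/
lemma card_beta_gt_le_colLen {N y : ℕ} {a : YoungDiagram} (hy : y ∉ betaSet N a) :
    ((Finset.range N).filter fun i => y < beta N a i).card ≤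
      a.colLen ((Finset.range y).filter fun z => z ∉ betaSet N a).card := by
  set t := ((Finset.range N).filter fun i => y < beta N a i).card
  have hcount := card_beta_gt_add hy
  have htN : t ≤ N := (Finset.card_filter_le _ _).trans_eq (Finset.card_range N)
  rcases Nat.eq_zero_or_pos t with ht | ht
  · omega
  have hlast : y < beta N a (t - 1) := by
    by_contra hle
    have hsub : ((Finset.range N).filter fun i => y < beta N a i) ⊆ Finset.range (t - 1) := by
      intro i hi
      rw [Finset.mem_filter, Finset.mem_range] at hi
      rw [Finset.mem_range]
      by_contra hge
      have := (beta_strictAntiOn N a).antitoneOn (show t - 1 < N by omega) hi.1 (not_lt.mp hge)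
      omega
    have := Finset.card_le_card hsub
    rw [Finset.card_range] at this
    omega
  have hmem : (t - 1, ((Finset.range y).filter fun z => z ∉ betaSet N a).card) ∈ a :=
    mem_iff_lt_rowLen.mpr (by unfold beta at hlast; omega)
  have := mem_iff_lt_colLen.mp hmem
  omega

/-- The largest landing position `m` of a movable bead bounds how many such positions there
are, and the beads above `m` fill a tall column of `a`. -/
lemma exists_colLen_of_le_card_movable {n N e : ℕ} {a : YoungDiagram} (he : 0 < e)
    (h : e ≤ (movable n (betaSet N a)).card) :
    ∃ J, e ≤ J + 1 ∧ e + n ≤ a.colLen J + a.rowLen 0 := by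
  set M := (movable n (betaSet N a)).image (· - n)
  have hMcard : M.card = (movable n (betaSet N a)).card :=
    Finset.card_image_of_injOn fun x hx y hy hxy => by
      simp only [movable, Finset.coe_filter, Set.mem_ofPred_eq] at hx hy hxy
      omega
  have hMne : M.Nonempty := by
    rw [← Finset.card_pos, hMcard]
    omega
  set m := M.max' hMne
  obtain ⟨x, hx, hxm⟩ : ∃ x ∈ movable n (betaSet N a), x - n = m :=
    Finset.mem_image.mp (M.max'_mem hMne)
  obtain ⟨hxB, hnx, hxn⟩ := Finset.mem_filter.mp hx
  have hmB : m ∉ betaSet N a := hxm ▸ hxn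
  have hmn : m + n < a.rowLen 0 + N := by
    have := lt_of_mem_betaSet hxB
    omega
  have hsub : M.erase m ⊆ (Finset.range m).filter fun z => z ∉ betaSet N a := by
    intro z hz
    obtain ⟨hzm, hzM⟩ := Finset.mem_erase.mp hz
    obtain ⟨w, hw, rfl⟩ := Finset.mem_image.mp hzM
    have := M.le_max' _ hzM
    exact Finset.mem_filter.mpr ⟨Finset.mem_range.mpr (by omega), (Finset.mem_filter.mp hw).2.2⟩
  have hJ := Finset.card_le_card hsub
  rw [Finset.card_erase_of_mem (M.max'_mem hMne), hMcard] at hJ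
  refine ⟨((Finset.range m).filter fun z => z ∉ betaSet N a).card, by omega, ?_⟩
  have := card_beta_gt_add hmB
  have := card_beta_gt_le_colLen hmB
  omega

section LittlewoodRichardson

variable {lam mu nu : YoungDiagram} {T : ℕ × ℕ → ℕ}

lemma entry_le_colLen (hT : IsLRTableau lam mu nu T) {p : ℕ × ℕ}
    (hp : p ∈ skewCells lam nu) : T p ≤ mu.colLen 0 := by
  obtain ⟨-, hsupp, -, -, hcontent, -⟩ := hT
  have hpos := (hsupp p).mpr hp
  have hrow : 0 < mu.rowLen (T p - 1) := by
    rw [← hcontent]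
    exact Finset.card_pos.mpr ⟨p, Finset.mem_filter.mpr ⟨hp, by omega⟩⟩
  have := mem_iff_lt_colLen.mp (mem_iff_lt_rowLen.mpr hrow)
  omega

lemma colLen_le_add_of_isLRTableau (hT : IsLRTableau lam mu nu T) (j : ℕ) :
    nu.colLen j ≤ lam.colLen j + mu.colLen 0 := by
  have hskew : ∀ r ∈ Finset.Ico (lam.colLen j) (nu.colLen j), (r, j) ∈ skewCells lam nu := by
    intro r hr
    rw [Finset.mem_Ico] at hr
    rw [mem_skewCells, mem_iff_lt_colLen, mem_iff_lt_colLen]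
    omega
  have hmono : StrictMonoOn (fun r => T (r, j)) (Finset.Ico (lam.colLen j) (nu.colLen j)) :=
    fun r hr r' hr' h => hT.2.2.2.1 r r' j h (hskew r hr) (hskew r' hr')
  have := Finset.card_le_card_of_injOn (t := Finset.Icc 1 (mu.colLen 0)) _
    (fun r hr => Finset.mem_Icc.mpr
      ⟨(hT.2.1 _).mpr (hskew r hr), entry_le_colLen hT (hskew r hr)⟩) hmono.injOn
  simp only [Nat.card_Ico, Nat.card_Icc] at this
  omega

lemma le_entry_of_col (hT : IsLRTableau lam mu nu T) {i j d : ℕ}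
    (h : ∀ r, i ≤ r → r ≤ i + d → (r, j) ∈ skewCells lam nu) :
    d + 1 ≤ T (i + d, j) := by
  induction d with
  | zero => exact (hT.2.1 _).mpr (h i le_rfl le_rfl)
  | succ d ih =>
    have := ih fun r h1 h2 => h r h1 (by omega)
    have := hT.2.2.2.1 (i + d) (i + d + 1) j (by omega) (h _ (by omega) (by omega))
      (h _ (by omega) (by omega))
    rw [← add_assoc]
    omega

/-- Occurrences of `v` in the reverse reading word of `T` up to and including the cell `(i, j)`. -/
def prefixCount (lam nu : YoungDiagram) (T : ℕ × ℕ → ℕ) (v i j : ℕ) : ℕ :=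
  ((skewCells lam nu).filter fun p => T p = v ∧ (p.1 < i ∨ (p.1 = i ∧ j ≤ p.2))).card

lemma prefixCount_le_rowLen (hT : IsLRTableau lam mu nu T) (r i j : ℕ) :
    prefixCount lam nu T (r + 1) i j ≤ mu.rowLen r :=
  hT.2.2.2.2.1 r ▸ Finset.card_le_card fun _ hp =>
    Finset.mem_filter.mpr ⟨(Finset.mem_filter.mp hp).1, (Finset.mem_filter.mp hp).2.1⟩

lemma prefixCount_anti (hT : IsLRTableau lam mu nu T) {v w : ℕ} (hv : 1 ≤ v) (hvw : v ≤ w)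
    (i j : ℕ) : prefixCount lam nu T w i j ≤ prefixCount lam nu T v i j := by
  induction w, hvw using Nat.le_induction with
  | base => exact le_rfl
  | succ w hvw ih =>
    have := hT.2.2.2.2.2 i j (w - 1)
    rw [show w - 1 + 2 = w + 1 by omega, show w - 1 + 1 = w by omega] at this
    exact this.trans ih

lemma prefixCount_succ_lt {i j : ℕ}
    (hp : (i, j) ∈ skewCells lam nu) :
    prefixCount lam nu T (T (i, j)) i (j + 1) < prefixCount lam nu T (T (i, j)) i j := by
  refine Finset.card_lt_card ((Finset.ssubset_iff_of_subset ?_).mpr ⟨(i, j), ?_, ?_⟩)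
  · intro p
    simp only [Finset.mem_filter]
    rintro ⟨hp, hv, hpos⟩
    exact ⟨hp, hv, by omega⟩
  · exact Finset.mem_filter.mpr ⟨hp, rfl, Or.inr ⟨rfl, le_rfl⟩⟩
  · simp

/-- Walking left along the run, the lattice property keeps the count of the current entry from
dropping, and each cell adds one. -/
lemma le_prefixCount_of_row (hT : IsLRTableau lam mu nu T) {i d : ℕ} :
    ∀ {j}, (∀ c, j ≤ c → c ≤ j + d → (i, c) ∈ skewCells lam nu) →
      d + 1 ≤ prefixCount lam nu T (T (i, j)) i j := by
  induction d with
  | zero =>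
    intro j h
    have := prefixCount_succ_lt (T := T) (h j le_rfl le_rfl)
    omega
  | succ d ih =>
    intro j h
    have hj := h j le_rfl (by omega)
    have hrow := hT.2.2.1 i j (j + 1) (by omega) hj (h (j + 1) (by omega) (by omega))
    have := ih (j := j + 1) fun c h1 h2 => h c (by omega) (by omega)
    have := prefixCount_anti hT ((hT.2.1 _).mpr hj) hrow i (j + 1)
    have := prefixCount_succ_lt (T := T) hj
    omega

lemma le_diagLen_of_square_subset_skewCells (hT : IsLRTableau lam mu nu T) {i e : ℕ}
    (he : 0 < e) (h : ∀ r c, i ≤ r → r < i + e → c < e → (r, c) ∈ skewCells lam nu) :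
    e ≤ diagLen mu := by
  have hcol := le_entry_of_col hT (d := e - 1) fun r h1 h2 => h r 0 h1 (by omega) he
  have hrow := le_prefixCount_of_row hT (i := i + (e - 1)) (j := 0) (d := e - 1)
    fun c _ hc => h _ c (by omega) (by omega) (by omega)
  have := prefixCount_le_rowLen hT (T (i + (e - 1), 0) - 1) (i + (e - 1)) 0
  rw [Nat.sub_add_cancel (by omega)] at this
  have hmem : (T (i + (e - 1), 0) - 1, e - 1) ∈ mu := mem_iff_lt_rowLen.mpr (by omega)
  exact le_diagLen_of_mem hmem (by omega) (by omega)

end LittlewoodRichardson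

lemma IsCore.pos {n : ℕ} {t : YoungDiagram} (h : IsCore n t) : 0 < n := by
  refine Nat.pos_of_ne_zero fun hn => h ⟨t, ?_⟩
  simp [RimStep, IsRimHookRemoval, skewCells, hn]

lemma exists_nonempty_qSet {l k e : ℕ} {lam mu nu : YoungDiagram}
    (h : qCoeff l k lam mu nu e ≠ 0) : ∃ s, Nonempty (QSet l k lam mu nu e s) := by
  by_contra! hempty
  have := hempty 1
  have := hempty (-1)
  simp [qCoeff] at h

theorem dmax_le_min_diag_general (l k : ℕ) (lam mu : YoungDiagram)
    (hlam : lam ≤ rect l k) (hmu : mu ≤ rect l k) :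
    ∀ (e : ℕ) (nu : YoungDiagram), nu ≤ rect l k → qCoeff l k lam mu nu e ≠ 0 →
      e ≤ min (diagLen lam) (diagLen mu) := by
  intro e nu _ hq
  obtain ⟨s, ⟨⟨ρ, T⟩, hT, hρk, hreach, hcore⟩⟩ := exists_nonempty_qSet hq
  dsimp only at hT hρk hreach
  rcases Nat.eq_zero_or_pos e with rfl | he
  · exact Nat.zero_le _
  have hlamCol := colLen_le_of_le_rect hlam
  have hmuCol := colLen_le_of_le_rect hmu 0
  have hρCol : ρ.colLen 0 ≤ 2 * l := by
    have := colLen_le_add_of_isLRTableau hT 0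
    have := hlamCol 0
    omega
  obtain ⟨J, hJ, hcol⟩ := exists_colLen_of_le_card_movable he
    (hreach.le_card_movable hcore.pos hρCol (by omega))
  have hρJ : (l + e - 1, J) ∈ ρ := mem_iff_lt_colLen.mpr (by omega)
  refine le_min ?_ ?_
  · have := colLen_le_add_of_isLRTableau hT J
    exact le_diagLen_of_mem (mem_iff_lt_colLen.mpr (show e - 1 < lam.colLen J by omega))
      (by omega) (by omega)
  · refine le_diagLen_of_square_subset_skewCells hT (i := l) he fun r c h1 h2 hc =>
      mem_skewCells.mpr ⟨ρ.up_left_mem (by omega) (by omega) hρJ, fun hmem => ?_⟩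
    have := mem_iff_lt_colLen.mp hmem
    have := hlamCol c
    omega

/-- For `lam, mu ⊆ l × k`, the maximal power of `q` appearing in the quantum
product `σ_lam * σ_mu` in `QH^*(Gr(l, l+k))` is at most `min(diag(lam), diag(mu))`: every
`e` and `nu ⊆ l × k` with nonzero quantum coefficient satisfy
`e ≤ min(diag(lam), diag(mu))`. -/
theorem dmax_le_min_diag (l k : ℕ) (hl : 1 ≤ l) (hk : 1 ≤ k) (lam mu : YoungDiagram)
    (hlam : lam ≤ rect l k) (hmu : mu ≤ rect l k) :
    ∀ (e : ℕ) (nu : YoungDiagram), nu ≤ rect l k → qCoeff l k lam mu nu e ≠ 0 →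
      e ≤ min (diagLen lam) (diagLen mu) :=
  dmax_le_min_diag_general l k lam mu hlam hmu

end QCGrass
end

section
/- Let a×A, b×B, c×C ⊆ l×k be rectangles with a+b ≤ l or A+B ≤ k (so σ_{a×A}·σ_{b×B} ≠ 0). Then κ(a×A, b×B) is disjoint from rotate(c×C) in the l×k rectangle if and only if conditions (ii)–(v) hold: a+c ≤ l or A+C ≤ k; b+c ≤ l or B+C ≤ k; a+b+c ≤ l or A+B+C ≤ 2k; a+b+c ≤ 2l or A+B+C ≤ k. Here κ(a×A,b×B) = (a×A) ∪ (b×B) ∪ ((a+b)×(A+B−k)) ∪ ((a+b−l)×(A+B)), with rectangles of nonpositive dimension or not fitting in l×k omitted. -/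
open YoungDiagram

namespace QCGrass

@[simp]
theorem mem_rect {m M : ℕ} {p : ℕ × ℕ} : p ∈ rect m M ↔ p.1 < m ∧ p.2 < M := by
  simp [rect, ← YoungDiagram.mem_cells]

theorem rect_mono {m n M N : ℕ} (hm : m ≤ n) (hM : M ≤ N) : rect m M ≤ rect n N := by
  intro p hp
  simp only [mem_rect] at hp ⊢
  omega

theorem rowLen_rect (m M i : ℕ) : (rect m M).rowLen i = if i < m then M else 0 := by
  refine eq_of_forall_lt_iff fun j => ?_
  rw [← YoungDiagram.mem_iff_lt_rowLen, mem_rect]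
  split_ifs with h <;> simp [h]

theorem mem_rotSet_rect {l k c C : ℕ} {p : ℕ × ℕ} :
    p ∈ rotSet l k (rect c C) ↔ l - c ≤ p.1 ∧ p.1 < l ∧ k - C ≤ p.2 ∧ p.2 < k := by
  simp only [rotSet, Set.mem_ofPred_eq, rowLen_rect]
  split_ifs <;> omega

/-- The paper's criterion: every box of `rotate(c × C)` lies weakly below and to the right of
its corner `(l - c, k - C)`, which is itself a box of `rotate(c × C)` as soon as some box of
`l × k` is. -/
theorem disjoint_rotSet_rect_iff {l k c C : ℕ} {ρ : YoungDiagram} (hρ : ρ ≤ rect l k) :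
    (∀ p ∈ ρ.cells, p ∉ rotSet l k (rect c C)) ↔ (l - c, k - C) ∉ ρ := by
  simp only [YoungDiagram.mem_cells, mem_rotSet_rect]
  constructor
  · intro hdisj hcorner
    have hlk := mem_rect.mp (hρ hcorner)
    exact hdisj _ hcorner ⟨le_rfl, hlk.1, le_rfl, hlk.2⟩
  · rintro hcorner ⟨i, j⟩ hij ⟨hi, -, hj, -⟩
    exact hcorner (ρ.up_left_mem hi hj hij)

def kappa (l k a A b B : ℕ) : YoungDiagram :=
  rect a A ⊔ rect b B ⊔
    (if a + b ≤ l then rect (a + b) (A + B - k) else ⊥) ⊔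
    (if A + B ≤ k then rect (a + b - l) (A + B) else ⊥)

theorem mem_kappa {l k a A b B : ℕ} {p : ℕ × ℕ} :
    p ∈ kappa l k a A b B ↔
      (p.1 < a ∧ p.2 < A) ∨ (p.1 < b ∧ p.2 < B) ∨
        (a + b ≤ l ∧ p.1 < a + b ∧ p.2 < A + B - k) ∨
        (A + B ≤ k ∧ p.1 < a + b - l ∧ p.2 < A + B) := by
  unfold kappa
  split_ifs <;> simp [YoungDiagram.mem_sup, *, or_assoc]

theorem kappa_le_rect {l k a A b B : ℕ} (ha : a ≤ l) (hA : A ≤ k) (hb : b ≤ l) (hB : B ≤ k) :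
    kappa l k a A b B ≤ rect l k := by
  unfold kappa
  refine sup_le (sup_le (sup_le (rect_mono ha hA) (rect_mono hb hB)) ?_) ?_ <;>
    split_ifs <;> first | exact bot_le | exact rect_mono (by omega) (by omega)

/-- For rectangles `a × A`, `b × B`, `c × C` inside `l × k` with `a + b ≤ l`
or `A + B ≤ k`, the diagram `κ(a×A, b×B) = (a×A) ∪ (b×B) ∪ ((a+b)×(A+B-k)) ∪
((a+b-l)×(A+B))` (rectangles of nonpositive dimensions or not fitting in `l × k` omitted)
is disjoint from `rotate(c × C)` if and only if conditions (ii)-(v) hold. -/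
theorem kappa_disjoint_from_rotate_iff (l k a A b B c C : ℕ)
    (ha : a ≤ l) (hA : A ≤ k) (hb : b ≤ l) (hB : B ≤ k) (hc : c ≤ l) (hC : C ≤ k)
    (hnz : a + b ≤ l ∨ A + B ≤ k) (U : YoungDiagram)
    (hU : U = rect a A ⊔ rect b B ⊔
      (if a + b ≤ l then rect (a + b) (A + B - k) else ⊥) ⊔
      (if A + B ≤ k then rect (a + b - l) (A + B) else ⊥)) :
    (∀ p : ℕ × ℕ, p ∈ U.cells → p ∉ rotSet l k (rect c C)) ↔
    ((a + c ≤ l ∨ A + C ≤ k) ∧ (b + c ≤ l ∨ B + C ≤ k) ∧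
      (a + b + c ≤ l ∨ A + B + C ≤ 2 * k) ∧ (a + b + c ≤ 2 * l ∨ A + B + C ≤ k)) := by
  change U = kappa l k a A b B at hU
  subst hU
  rw [disjoint_rotSet_rect_iff (kappa_le_rect ha hA hb hB), mem_kappa]
  -- the corner `(l - c, k - C)` lies in one of the four rectangles of `κ` exactly when the
  -- corresponding condition among (ii)–(v) fails
  omega

end QCGrass
end
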